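/- Let p > 2, b, c > 0, and let x₀, x₁, x₂ > 0 and t₀' < t₁' < t₂' be real numbers. If x₁ ≤ F_{b(t₁'-t₀')}(x₀) and x₂ ≤ F_{c(t₂'-t₁')}(x₁), then x₂ ≤ F_{d(t₂'-t₀')}(x₀), where d = min{b, c}. -/

import Mathlib

/-!
Under the substitution `x ↦ x ^ (-q)` with `q = p - 2`, the map `F_a` becomes the translation by `a`:
`x ≤ F_a y ↔ y ^ (-q) + a ≤ x ^ (-q)`. The two hypotheses therefore add up to
`x₀ ^ (-q) + b (t₁' - t₀') + c (t₂' - t₁') ≤ x₂ ^ (-q)`, and `d (t₂' - t₀')` is at most that increment.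
-/

open Real

/-- `F_a` of the paper, with `q = p - 2`. -/
noncomputable def decayProfile (q a x : ℝ) : ℝ := x / (a * x ^ q + 1) ^ (1 / q)

lemma mul_mul_add_one_le_iff_inv_add_le_inv {X Y : ℝ} (a : ℝ) (hX : 0 < X) (hY : 0 < Y) :
    X * (a * Y + 1) ≤ Y ↔ Y⁻¹ + a ≤ X⁻¹ := by
  have hsum : Y⁻¹ + a = (a * Y + 1) / Y := by field_simp; ring
  rw [hsum, ← one_div, div_le_div_iff₀ hY hX, one_mul, mul_comm]

lemma le_decayProfile_iff {q a x y : ℝ} (hq : 0 < q) (ha : 0 ≤ a) (hx : 0 < x) (hy : 0 < y) :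
    x ≤ decayProfile q a y ↔ y ^ (-q) + a ≤ x ^ (-q) := by
  have hbase : 0 < a * y ^ q + 1 := by positivity
  have hroot : 0 < (a * y ^ q + 1) ^ (1 / q) := rpow_pos_of_pos hbase _
  have hroot_pow : ((a * y ^ q + 1) ^ (1 / q)) ^ q = a * y ^ q + 1 := by
    rw [← rpow_mul hbase.le, one_div_mul_cancel hq.ne', rpow_one]
  rw [decayProfile, le_div_iff₀ hroot, ← rpow_le_rpow_iff (by positivity) hy.le hq,
    mul_rpow hx.le hroot.le, hroot_pow, rpow_neg hx.le, rpow_neg hy.le,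
    mul_mul_add_one_le_iff_inv_add_le_inv a (rpow_pos_of_pos hx q) (rpow_pos_of_pos hy q)]

/-- Iteration lemma for `F_a(x) = x / (a x^(p-2)+1)^(1/(p-2))`. -/
theorem stmt1 (p b c x₀ x₁ x₂ t₀' t₁' t₂' : ℝ) (hp : 2 < p) (hb : 0 < b) (hc : 0 < c)
    (hx₀ : 0 < x₀) (hx₁ : 0 < x₁) (hx₂ : 0 < x₂) (h01 : t₀' < t₁') (h12 : t₁' < t₂')
    (h1 : x₁ ≤ x₀ / (b * (t₁' - t₀') * x₀ ^ (p - 2) + 1) ^ (1 / (p - 2)))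
    (h2 : x₂ ≤ x₁ / (c * (t₂' - t₁') * x₁ ^ (p - 2) + 1) ^ (1 / (p - 2))) :
    x₂ ≤ x₀ / (min b c * (t₂' - t₀') * x₀ ^ (p - 2) + 1) ^ (1 / (p - 2)) := by
  have hq : 0 < p - 2 := by linarith
  have hd : 0 < min b c := lt_min hb hc
  change x₁ ≤ decayProfile (p - 2) (b * (t₁' - t₀')) x₀ at h1
  change x₂ ≤ decayProfile (p - 2) (c * (t₂' - t₁')) x₁ at h2
  change x₂ ≤ decayProfile (p - 2) (min b c * (t₂' - t₀')) x₀
  rw [le_decayProfile_iff hq (mul_nonneg hb.le (sub_nonneg.2 h01.le)) hx₁ hx₀] at h1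
  rw [le_decayProfile_iff hq (mul_nonneg hc.le (sub_nonneg.2 h12.le)) hx₂ hx₁] at h2
  rw [le_decayProfile_iff hq (mul_nonneg hd.le (by linarith)) hx₂ hx₀]
  have hincr : min b c * (t₂' - t₀') ≤ b * (t₁' - t₀') + c * (t₂' - t₁') :=
    calc min b c * (t₂' - t₀') = min b c * (t₁' - t₀') + min b c * (t₂' - t₁') := by ring
      _ ≤ b * (t₁' - t₀') + c * (t₂' - t₁') :=
        add_le_add (mul_le_mul_of_nonneg_right (min_le_left b c) (sub_nonneg.2 h01.le))
          (mul_le_mul_of_nonneg_right (min_le_right b c) (sub_nonneg.2 h12.le))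
  linarith
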